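/- Consider a feedforward Softplus network with activations a^{(l)}_i = σ_θ(z^{(l)}_i) where σ_θ(z) = θ·log(1 + e^{z/θ}) for fixed θ > 0, and the paired decomposed pre-activations z^{(l,±)} propagated by the canonical nonnegative linear map on the entrywise weight split. If the decomposed activations are updated by the Softplus rule a^{(l,+)}_i = σ'_θ(z^{(l)}_i)·z^{(l,+)}_i + θ·H_θ(z^{(l)}_i) and a^{(l,-)}_i = σ'_θ(z^{(l)}_i)·z^{(l,-)}_i, where σ'_θ(z) = 1/(1+e^{-z/θ}) and H_θ(z) is the binary entropy of σ'_θ(z), then both components are nonnegative and a^{(l,+)}_i - a^{(l,-)}_i = σ_θ(z^{(l)}_i) at every layer and neuron. -/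

import Mathlib

open Finset

noncomputable section

/-- Positive part of a real number. -/
def pPart (u : ℝ) : ℝ := max u 0

/-- Negative part of a real number. -/
def nPart (u : ℝ) : ℝ := max (-u) 0

/-- Softplus at temperature `θ`. -/
def softplusT (θ z : ℝ) : ℝ := θ * Real.log (1 + Real.exp (z / θ))

/-- Sigmoid at temperature `θ`. -/
def sigmoidT (θ z : ℝ) : ℝ := 1 / (1 + Real.exp (-z / θ))

/-- Binary Shannon entropy of the Bernoulli parameter `sigmoidT θ z`. -/
def binEntropyT (θ z : ℝ) : ℝ :=
  -(sigmoidT θ z * Real.log (sigmoidT θ z)) -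
    (1 - sigmoidT θ z) * Real.log (1 - sigmoidT θ z)

/-- Activations of a feedforward Softplus network at temperature `θ`. -/
def softAct (θ : ℝ) (n : ℕ → ℕ) (W : ∀ l, Fin (n (l + 1)) → Fin (n l) → ℝ)
    (b : ∀ l, Fin (n (l + 1)) → ℝ) (x : Fin (n 0) → ℝ) : ∀ l, Fin (n l) → ℝ
  | 0 => x
  | (l + 1) => fun i => softplusT θ (b l i + ∑ j, W l i j * softAct θ n W b x l j)

/-- Softplus-decomposition activation pairs: canonical nonnegative linear map on the
entrywise weight split, with the Softplus update
`a⁺ = σ'_θ(z⁺−z⁻)·z⁺ + θ·H_θ(z⁺−z⁻)`, `a⁻ = σ'_θ(z⁺−z⁻)·z⁻`. -/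
def softPair (θ : ℝ) (n : ℕ → ℕ) (W : ∀ l, Fin (n (l + 1)) → Fin (n l) → ℝ)
    (b : ∀ l, Fin (n (l + 1)) → ℝ) (x : Fin (n 0) → ℝ) : ∀ l, Fin (n l) → ℝ × ℝ
  | 0 => fun k => (pPart (x k), nPart (x k))
  | (l + 1) => fun i =>
      let zp := pPart (b l i) + ∑ j, (pPart (W l i j) * (softPair θ n W b x l j).1 +
        nPart (W l i j) * (softPair θ n W b x l j).2)
      let zm := nPart (b l i) + ∑ j, (pPart (W l i j) * (softPair θ n W b x l j).2 +
        nPart (W l i j) * (softPair θ n W b x l j).1)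
      (sigmoidT θ (zp - zm) * zp + θ * binEntropyT θ (zp - zm),
       sigmoidT θ (zp - zm) * zm)

/-! The canonical map is linear in the split, so by induction `z⁺ − z⁻` is the network's
pre-activation `z` and only sums of products of nonnegative numbers occur. With `s = σ'_θ(z)`,
`log s − log (1 − s) = z/θ` and `−θ log (1 − s) = σ_θ(z)` give `θ H_θ(z) = σ_θ(z) − s z`, so
`a⁺ − a⁻ = s z + θ H_θ(z) = σ_θ(z)`, and `a±` are nonnegative because `s ∈ (0, 1)` and `H_θ ≥ 0`. -/

lemma pPart_nonneg (u : ℝ) : 0 ≤ pPart u := le_max_right u 0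

lemma nPart_nonneg (u : ℝ) : 0 ≤ nPart u := le_max_right (-u) 0

lemma pPart_sub_nPart (u : ℝ) : pPart u - nPart u = u := by
  rcases le_total u 0 with h | h <;> simp [pPart, nPart, h]

section CanonicalMap

variable {ι : Type*} [Fintype ι] (c : ℝ) (w aPos aNeg : ι → ℝ)

lemma canonical_pre_nonneg (hPos : ∀ j, 0 ≤ aPos j) (hNeg : ∀ j, 0 ≤ aNeg j) :
    0 ≤ pPart c + ∑ j, (pPart (w j) * aPos j + nPart (w j) * aNeg j) ∧
      0 ≤ nPart c + ∑ j, (pPart (w j) * aNeg j + nPart (w j) * aPos j) := by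
  refine ⟨add_nonneg (pPart_nonneg c) (sum_nonneg fun j _ => ?_),
    add_nonneg (nPart_nonneg c) (sum_nonneg fun j _ => ?_)⟩
  · exact add_nonneg (mul_nonneg (pPart_nonneg _) (hPos j)) (mul_nonneg (nPart_nonneg _) (hNeg j))
  · exact add_nonneg (mul_nonneg (pPart_nonneg _) (hNeg j)) (mul_nonneg (nPart_nonneg _) (hPos j))

lemma canonical_pre_sub :
    (pPart c + ∑ j, (pPart (w j) * aPos j + nPart (w j) * aNeg j)) -
      (nPart c + ∑ j, (pPart (w j) * aNeg j + nPart (w j) * aPos j)) =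
      c + ∑ j, w j * (aPos j - aNeg j) := by
  rw [add_sub_add_comm, ← sum_sub_distrib, pPart_sub_nPart]
  congr 1
  refine sum_congr rfl fun j _ => ?_
  linear_combination (aPos j - aNeg j) * pPart_sub_nPart (w j)

end CanonicalMap

lemma Real.log_sigmoid_neg (u : ℝ) : Real.log (Real.sigmoid (-u)) = -Real.log (1 + Real.exp u) := by
  rw [Real.sigmoid_def, neg_neg, Real.log_inv]

lemma Real.binEntropy_sigmoid (u : ℝ) :
    Real.binEntropy (Real.sigmoid u) = Real.log (1 + Real.exp u) - Real.sigmoid u * u := by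
  have hlog : Real.log (Real.sigmoid u) = u + Real.log (Real.sigmoid (-u)) := by
    rw [← Real.sigmoid_mul_rexp_neg, Real.log_mul (Real.sigmoid_pos u).ne' (Real.exp_ne_zero _),
      Real.log_exp]
    ring
  rw [Real.binEntropy, Real.log_inv, Real.log_inv, ← Real.sigmoid_neg, hlog, Real.log_sigmoid_neg,
    Real.sigmoid_neg]
  ring

lemma sigmoidT_eq_sigmoid (θ z : ℝ) : sigmoidT θ z = Real.sigmoid (z / θ) := by
  rw [sigmoidT, Real.sigmoid_def, one_div, neg_div]

lemma binEntropyT_eq_binEntropy (θ z : ℝ) : binEntropyT θ z = Real.binEntropy (sigmoidT θ z) := by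
  rw [binEntropyT, Real.binEntropy, Real.log_inv, Real.log_inv]
  ring

lemma binEntropyT_nonneg (θ z : ℝ) : 0 ≤ binEntropyT θ z := by
  rw [binEntropyT_eq_binEntropy, sigmoidT_eq_sigmoid]
  exact Real.binEntropy_nonneg (Real.sigmoid_nonneg _) (Real.sigmoid_le_one _)

lemma mul_binEntropyT {θ : ℝ} (hθ : θ ≠ 0) (z : ℝ) :
    θ * binEntropyT θ z = softplusT θ z - sigmoidT θ z * z := by
  rw [binEntropyT_eq_binEntropy, sigmoidT_eq_sigmoid, Real.binEntropy_sigmoid, softplusT]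
  field_simp

lemma softplus_update_nonneg_and_sub {θ : ℝ} (hθ : 0 < θ) {zPos zNeg : ℝ}
    (hPos : 0 ≤ zPos) (hNeg : 0 ≤ zNeg) :
    (0 ≤ sigmoidT θ (zPos - zNeg) * zPos + θ * binEntropyT θ (zPos - zNeg) ∧
      0 ≤ sigmoidT θ (zPos - zNeg) * zNeg) ∧
    sigmoidT θ (zPos - zNeg) * zPos + θ * binEntropyT θ (zPos - zNeg) -
      sigmoidT θ (zPos - zNeg) * zNeg = softplusT θ (zPos - zNeg) := by
  have hσ : 0 ≤ sigmoidT θ (zPos - zNeg) := by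
    rw [sigmoidT_eq_sigmoid]; exact Real.sigmoid_nonneg _
  refine ⟨⟨?_, mul_nonneg hσ hNeg⟩, ?_⟩
  · exact add_nonneg (mul_nonneg hσ hPos) (mul_nonneg hθ.le (binEntropyT_nonneg θ _))
  · linear_combination mul_binEntropyT hθ.ne' (zPos - zNeg)

lemma softPair_nonneg_and_sub {θ : ℝ} (hθ : 0 < θ) (n : ℕ → ℕ)
    (W : ∀ l, Fin (n (l + 1)) → Fin (n l) → ℝ) (b : ∀ l, Fin (n (l + 1)) → ℝ)
    (x : Fin (n 0) → ℝ) (l : ℕ) (i : Fin (n l)) :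
    (0 ≤ (softPair θ n W b x l i).1 ∧ 0 ≤ (softPair θ n W b x l i).2) ∧
      (softPair θ n W b x l i).1 - (softPair θ n W b x l i).2 = softAct θ n W b x l i := by
  induction l with
  | zero => exact ⟨⟨pPart_nonneg _, nPart_nonneg _⟩, pPart_sub_nPart _⟩
  | succ l ih =>
    have hPos j := (ih j).1.1
    have hNeg j := (ih j).1.2
    obtain ⟨hzPos, hzNeg⟩ := canonical_pre_nonneg (b l i) (W l i) _ _ hPos hNeg
    refine (softplus_update_nonneg_and_sub hθ hzPos hzNeg).imp_right fun h => h.trans ?_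
    rw [canonical_pre_sub]
    simp only [(ih _).2]
    rfl

/-- Layerwise recovery of the Softplus network by the Softplus decomposition: both
decomposed components are nonnegative, and their difference equals the Softplus
activation at every layer and neuron. -/
theorem softplus_decomposition_recovery (θ : ℝ) (hθ : 0 < θ) (n : ℕ → ℕ)
    (W : ∀ l, Fin (n (l + 1)) → Fin (n l) → ℝ)
    (b : ∀ l, Fin (n (l + 1)) → ℝ) (x : Fin (n 0) → ℝ) :
    (∀ l (i : Fin (n l)),
      0 ≤ (softPair θ n W b x l i).1 ∧ 0 ≤ (softPair θ n W b x l i).2) ∧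
    (∀ l (i : Fin (n l)),
      (softPair θ n W b x l i).1 - (softPair θ n W b x l i).2 = softAct θ n W b x l i) ∧
    (∀ l (i : Fin (n (l + 1))),
      (softPair θ n W b x (l + 1) i).1 - (softPair θ n W b x (l + 1) i).2 =
        softplusT θ (b l i + ∑ j, W l i j * softAct θ n W b x l j)) :=
  ⟨fun l i => (softPair_nonneg_and_sub hθ n W b x l i).1,
    fun l i => (softPair_nonneg_and_sub hθ n W b x l i).2,
    fun l i => (softPair_nonneg_and_sub hθ n W b x (l + 1) i).2⟩

end
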